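/- arXiv:1906.05243 — 3 statements merged into one kernel-verified Lean document; each statement's English description precedes it below -/
import Mathlib

section
/- There exist a 2×2 row-stochastic matrix P, a probability vector d with positive entries, a discount γ ∈ (0,1), and a 2×1 feature matrix X such that the matrix A = XᵀD(I − γPᵀ)X (with D = diag(d)) is negative, i.e., A < 0 as a 1×1 matrix; consequently for every step size α > 0 the spectral radius of I − αA exceeds 1. -/
open Matrix

/-- there exist a 2×2 row-stochastic `P`, a positive probability
vector `d`, a discount `γ ∈ (0,1)`, and a 2×1 feature matrix `X` such that the
1×1 matrix `A = Xᵀ diag(d) (I − γPᵀ) X` is negative; consequently, for every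
step size `α > 0` the spectral radius of `I − αA` (here `|1 − α A₀₀|`) exceeds 1. -/
theorem deadly_triad_exists :
    ∃ (P : Matrix (Fin 2) (Fin 2) ℝ) (d : Fin 2 → ℝ) (γ : ℝ)
      (X : Matrix (Fin 2) (Fin 1) ℝ),
      (∀ i j, 0 ≤ P i j) ∧ (∀ i, ∑ j, P i j = 1) ∧
      (∀ i, 0 < d i) ∧ (∑ i, d i = 1) ∧
      0 < γ ∧ γ < 1 ∧
      ((Xᵀ * Matrix.diagonal d * ((1 : Matrix (Fin 2) (Fin 2) ℝ) - γ • Pᵀ) * X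
        : Matrix (Fin 1) (Fin 1) ℝ) 0 0) < 0 ∧
      ∀ α : ℝ, 0 < α →
        1 < |1 - α * ((Xᵀ * Matrix.diagonal d *
              ((1 : Matrix (Fin 2) (Fin 2) ℝ) - γ • Pᵀ) * X
            : Matrix (Fin 1) (Fin 1) ℝ) 0 0)| := by
  refine ⟨!![1, 0; 1, 0], ![0.9, 0.1], 0.99, !![1; 2], ?_, ?_, ?_, ?_, ?_, ?_, ?_, ?_⟩
  · intro i j; fin_cases i <;> fin_cases j <;> norm_num
  · intro i; fin_cases i <;> simp [Fin.sum_univ_two]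
  · intro i; fin_cases i <;> norm_num
  · simp [Fin.sum_univ_two]; norm_num
  · norm_num
  · norm_num
  · norm_num [Matrix.mul_apply, Fin.sum_univ_two, Matrix.one_apply,
      Matrix.diagonal_apply, Matrix.transpose_apply, Matrix.vecHead, Matrix.vecTail]
  · intro α hα
    have h : (((!![(1:ℝ); 2])ᵀ * Matrix.diagonal ![(0.9:ℝ), 0.1] *
        ((1 : Matrix (Fin 2) (Fin 2) ℝ) - (0.99 : ℝ) • (!![(1:ℝ), 0; 1, 0])ᵀ) * !![(1:ℝ); 2]
        : Matrix (Fin 1) (Fin 1) ℝ) 0 0) = -1.373 := by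
      norm_num [Matrix.mul_apply, Fin.sum_univ_two, Matrix.one_apply,
        Matrix.diagonal_apply, Matrix.transpose_apply, Matrix.vecHead, Matrix.vecTail]
    rw [h]
    rw [abs_of_pos (by nlinarith)]
    nlinarith
end

section
/- Let P be row-stochastic with stationary distribution d, γ ∈ [0,1), and define the Bellman operator T(v) = r + γPv for a fixed reward vector r. Then T is a γ-contraction in the d-weighted Euclidean norm ‖v‖_D = √(vᵀDv), where D = diag(d). -/
open Matrix

/-- the Bellman operator `T(v) = r + γPv` is a `γ`-contraction in
the `d`-weighted Euclidean norm, where `d` is a stationary distribution of the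
row-stochastic matrix `P` and `γ ∈ [0,1)`. -/
theorem bellman_operator_contraction {S : Type*} [Fintype S]
    (P : Matrix S S ℝ) (d : S → ℝ) (γ : ℝ) (r : S → ℝ)
    (hP_nonneg : ∀ s s', 0 ≤ P s s')
    (hP_row : ∀ s, ∑ s', P s s' = 1)
    (hd_pos : ∀ s, 0 < d s)
    (hd_sum : ∑ s, d s = 1)
    (hd_stat : ∀ s', ∑ s, d s * P s s' = d s')
    (hγ0 : 0 ≤ γ) (hγ1 : γ < 1)
    (T : (S → ℝ) → (S → ℝ))
    (hT : ∀ v, T v = r + γ • (P *ᵥ v)) :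
    ∀ u v : S → ℝ,
      Real.sqrt (∑ s, d s * (T u s - T v s) ^ 2) ≤
        γ * Real.sqrt (∑ s, d s * (u s - v s) ^ 2) := by
  intro u v
  set w : S → ℝ := fun s => u s - v s with hw
  have hTuv : ∀ s, T u s - T v s = γ * (P *ᵥ w) s := by
    intro s
    simp only [hT, Pi.add_apply, Pi.smul_apply, smul_eq_mul, mulVec, dotProduct, hw]
    rw [add_sub_add_left_eq_sub, ← mul_sub, ← Finset.sum_sub_distrib]
    congr 1; congr 1; ext s'; ring
  -- key inequality: ∑ d s * ((Pw) s)^2 ≤ ∑ d s * (w s)^2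
  have key : ∑ s, d s * ((P *ᵥ w) s) ^ 2 ≤ ∑ s, d s * (w s) ^ 2 := by
    have step1 : ∀ s, ((P *ᵥ w) s) ^ 2 ≤ ∑ s', P s s' * (w s') ^ 2 := by
      intro s
      have cs := Finset.sum_mul_sq_le_sq_mul_sq Finset.univ
        (fun s' => Real.sqrt (P s s')) (fun s' => Real.sqrt (P s s') * w s')
      have h1 : ∀ s', Real.sqrt (P s s') * (Real.sqrt (P s s') * w s') = P s s' * w s' := by
        intro s'
        rw [← mul_assoc, Real.mul_self_sqrt (hP_nonneg s s')]
      have h2 : ∀ s', Real.sqrt (P s s') ^ 2 = P s s' :=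
        fun s' => Real.sq_sqrt (hP_nonneg s s')
      simp only [h1, h2, mul_pow] at cs
      calc ((P *ᵥ w) s) ^ 2 = (∑ s', P s s' * w s') ^ 2 := by
            simp [mulVec, dotProduct]
        _ ≤ (∑ s', P s s') * ∑ s', P s s' * (w s') ^ 2 := cs
        _ = ∑ s', P s s' * (w s') ^ 2 := by rw [hP_row s, one_mul]
    calc ∑ s, d s * ((P *ᵥ w) s) ^ 2
        ≤ ∑ s, d s * ∑ s', P s s' * (w s') ^ 2 :=
          Finset.sum_le_sum fun s _ =>
            mul_le_mul_of_nonneg_left (step1 s) (hd_pos s).le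
      _ = ∑ s, ∑ s', d s * P s s' * (w s') ^ 2 := by
          congr 1; ext s; rw [Finset.mul_sum]; congr 1; ext s'; ring
      _ = ∑ s', ∑ s, d s * P s s' * (w s') ^ 2 := Finset.sum_comm
      _ = ∑ s', (∑ s, d s * P s s') * (w s') ^ 2 := by
          congr 1; ext s'; rw [Finset.sum_mul]
      _ = ∑ s', d s' * (w s') ^ 2 := by
          congr 1; ext s'; rw [hd_stat s']
  have hLHS : ∑ s, d s * (T u s - T v s) ^ 2 = γ ^ 2 * ∑ s, d s * ((P *ᵥ w) s) ^ 2 := by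
    rw [Finset.mul_sum]; congr 1; ext s; rw [hTuv s]; ring
  rw [hLHS, Real.sqrt_mul (sq_nonneg γ), Real.sqrt_sq hγ0]
  exact mul_le_mul_of_nonneg_left
    (Real.sqrt_le_sqrt key) hγ0
end

section
/- There exist a row-stochastic 2×2 matrix P̂ (a 'model'), a probability vector d that is not stationary for P̂, γ ∈ (0,1), and a feature matrix X, such that the matrix = XᵀD(I − γP̂ᵀ)X has an eigenvalue with negative real part; hence ρ(I − αÂ) > 1 for all α > 0 and the corresponding TD iteration diverges for some initial weight. -/
/-!
With `P̂ = !![0, 1; 0, 1]` every transition leads to state `1`, so the uniform distribution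
`d = (1/2, 1/2)` is not stationary for `P̂`. For the single feature `X = (1, 2)ᵀ` and `γ = 9/10`,
`Â = Σᵢ dᵢ xᵢ (xᵢ − γ Σⱼ P̂ᵢⱼ xⱼ) = ½ · 1 · (1 − γ · 2) + ½ · 2 · (2 − γ · 2) = −1/5`:
bootstrapping towards the large feature of state `1` from state `0`, which `d` weights as much
as state `1` itself, makes `Â` negative. An eigenvalue `λ` of `Â` with negative real part gives
the eigenvalue `1 − αλ` of `I − αÂ`, whose real part already exceeds `1`.
-/

open Matrix

theorem Matrix.mem_spectrum_fin_one {R : Type*} [CommRing R] [Nontrivial R]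
    (A : Matrix (Fin 1) (Fin 1) R) : A 0 0 ∈ spectrum R A := by
  rw [spectrum.mem_iff, Matrix.isUnit_iff_isUnit_det, Matrix.det_fin_one]
  simp [Matrix.algebraMap_matrix_apply]

open Polynomial in
theorem spectrum.one_sub_mul_mem_one_sub_smul {𝕜 A : Type*} [Field 𝕜] [Ring A] [Algebra 𝕜 A]
    {a : A} {μ : 𝕜} (hμ : μ ∈ spectrum 𝕜 a) (c : 𝕜) : 1 - c * μ ∈ spectrum 𝕜 (1 - c • a) := by
  have h := spectrum.subset_polynomial_aeval a (1 - C c * X) ⟨μ, hμ, rfl⟩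
  simpa only [eval_sub, eval_one, eval_mul, eval_C, eval_X, map_sub, map_one, map_mul, aeval_C,
    aeval_X, Algebra.smul_def] using h

theorem Complex.one_lt_norm_one_sub_mul_of_re_neg {α : ℝ} (hα : 0 < α) {z : ℂ} (hz : z.re < 0) :
    1 < ‖1 - α * z‖ :=
  calc 1 < (1 - α * z).re := by
        rw [Complex.sub_re, Complex.one_re, Complex.re_ofReal_mul]
        nlinarith
    _ ≤ ‖1 - α * z‖ := Complex.re_le_norm _

theorem Matrix.map_one_sub_smul {n K L : Type*} [Fintype n] [DecidableEq n] [CommRing K]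
    [Ring L] [Algebra K L] (M : Matrix n n K) (c : K) :
    (1 - c • M).map (algebraMap K L) = 1 - algebraMap K L c • M.map (algebraMap K L) := by
  ext i j
  by_cases h : i = j <;> simp [h, Algebra.smul_def (A := L)]

theorem td_matrix_counterexample :
    !![(1 : ℝ); 2]ᵀ * diagonal ![(1 / 2 : ℝ), 1 / 2] *
      ((1 : Matrix (Fin 2) (Fin 2) ℝ) - (9 / 10 : ℝ) • !![(0 : ℝ), 1; 0, 1]ᵀ) * !![(1 : ℝ); 2] =
      !![-(1 / 5)] := by
  ext i j
  fin_cases i; fin_cases j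
  norm_num [Matrix.mul_apply, Fin.sum_univ_two, Matrix.one_apply]

/-- there exist a row-stochastic 2×2 model `P̂`, a probability
vector `d` that is not stationary for `P̂`, `γ ∈ (0,1)`, and a feature matrix
`X`, such that `Â = Xᵀ diag(d) (I − γP̂ᵀ) X` has an eigenvalue with negative
real part; hence for every `α > 0` the matrix `I − αÂ` has an eigenvalue of
modulus greater than 1 (so the TD iteration diverges). -/
theorem model_based_td_divergence_exists :
    ∃ (Phat : Matrix (Fin 2) (Fin 2) ℝ) (d : Fin 2 → ℝ) (γ : ℝ)
      (X : Matrix (Fin 2) (Fin 1) ℝ),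
      (∀ i j, 0 ≤ Phat i j) ∧ (∀ i, ∑ j, Phat i j = 1) ∧
      (∀ i, 0 ≤ d i) ∧ (∑ i, d i = 1) ∧
      (¬ ∀ j, ∑ i, d i * Phat i j = d j) ∧
      0 < γ ∧ γ < 1 ∧
      (∃ lam ∈ spectrum ℂ
          (((Xᵀ * Matrix.diagonal d * ((1 : Matrix (Fin 2) (Fin 2) ℝ) - γ • Phatᵀ) * X
            : Matrix (Fin 1) (Fin 1) ℝ)).map (algebraMap ℝ ℂ)), lam.re < 0) ∧
      ∀ α : ℝ, 0 < α →
        ∃ mu ∈ spectrum ℂ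
          ((((1 : Matrix (Fin 1) (Fin 1) ℝ) -
              α • (Xᵀ * Matrix.diagonal d * ((1 : Matrix (Fin 2) (Fin 2) ℝ) - γ • Phatᵀ) * X))
            ).map (algebraMap ℝ ℂ)), 1 < ‖mu‖ := by
  have hlam : ((-(1 / 5) : ℝ) : ℂ) ∈
      spectrum ℂ ((!![-(1 / 5)] : Matrix (Fin 1) (Fin 1) ℝ).map (algebraMap ℝ ℂ)) := by
    simpa using Matrix.mem_spectrum_fin_one
      ((!![-(1 / 5)] : Matrix (Fin 1) (Fin 1) ℝ).map (algebraMap ℝ ℂ))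
  have hre : (((-(1 / 5) : ℝ) : ℂ)).re < 0 := by norm_num
  refine ⟨!![0, 1; 0, 1], ![1 / 2, 1 / 2], 9 / 10, !![1; 2], ?_, ?_, ?_, ?_, ?_, by norm_num,
    by norm_num, ?_, ?_⟩
  · intro i j; fin_cases i <;> fin_cases j <;> norm_num
  · intro i; fin_cases i <;> norm_num [Fin.sum_univ_two]
  · intro i; fin_cases i <;> norm_num
  · norm_num [Fin.sum_univ_two]
  · intro hstat
    norm_num [Fin.sum_univ_two] at hstat
  · rw [td_matrix_counterexample]
    exact ⟨_, hlam, hre⟩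
  · intro α hα
    rw [td_matrix_counterexample, Matrix.map_one_sub_smul]
    exact ⟨_, spectrum.one_sub_mul_mem_one_sub_smul hlam _,
      Complex.one_lt_norm_one_sub_mul_of_re_neg hα hre⟩
end
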